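/- For a pure state $\psi = |\psi\rangle\langle\psi|$ and a Hermitian operator $A$ on a finite-dimensional Hilbert space, the trace norm of the commutator satisfies $\|[A, \psi]\|_1 = 2\sqrt{V_\psi(A)}$, where $V_\psi(A) = \langle\psi|A^2|\psi\rangle - \langle\psi|A|\psi\rangle^2$. -/

import Mathlib

open Matrix
open scoped Kronecker ComplexOrder

variable {n m : Type*} [Fintype n] [DecidableEq n] [Fintype m] [DecidableEq m]

open Classical in
/-- square root of a matrix (zero if not PSD) -/
noncomputable def msqrt (A : Matrix n n ℂ) : Matrix n n ℂ :=
  if h : A.PosSemidef then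
    (h.1.eigenvectorUnitary : Matrix n n ℂ) *
      diagonal ((↑) ∘ (Real.sqrt ·) ∘ h.1.eigenvalues) * (star h.1.eigenvectorUnitary : Matrix n n ℂ)
  else 0

/-- trace norm -/
noncomputable def traceNorm (X : Matrix n m ℂ) : ℝ :=
  ((msqrt (Xᴴ * X)).trace).re

def IsDensity (ρ : Matrix n n ℂ) : Prop := ρ.PosSemidef ∧ ρ.trace = 1

noncomputable def variance (σ A : Matrix n n ℂ) : ℝ :=
  (Matrix.trace (σ * (A * A))).re - ((Matrix.trace (σ * A)).re) ^ 2

/-- `L` is a symmetric logarithmic derivative for `(σ, W)`. -/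
def IsSLD (σ W L : Matrix n n ℂ) : Prop :=
  L.IsHermitian ∧ L * σ + σ * L = ((-2 : ℂ) * Complex.I) • (W * σ - σ * W)

/-- SLD Fisher information value associated with a given SLD `L`. -/
noncomputable def fisherVal (σ L : Matrix n n ℂ) : ℝ :=
  (Matrix.trace (σ * (L * L))).re

noncomputable def fidelity (ρ σ : Matrix n n ℂ) : ℝ :=
  ((msqrt (msqrt ρ * σ * msqrt ρ)).trace).re

noncomputable def purifiedDist (ρ σ : Matrix n n ℂ) : ℝ :=
  Real.sqrt (1 - fidelity ρ σ ^ 2)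

/-- completely positive -/
def IsCompletelyPositive (Φ : Matrix n n ℂ →ₗ[ℂ] Matrix m m ℂ) : Prop :=
  ∀ (k : ℕ) (M : Matrix (Fin k × n) (Fin k × n) ℂ), M.PosSemidef →
    (Matrix.of fun (p q : Fin k × m) => (Φ (Matrix.of fun i j => M (p.1, i) (q.1, j))) p.2 q.2).PosSemidef

def IsCPTP (Φ : Matrix n n ℂ →ₗ[ℂ] Matrix m m ℂ) : Prop :=
  IsCompletelyPositive Φ ∧ ∀ X, (Φ X).trace = X.trace

/-- partial trace over the second factor -/
noncomputable def ptraceR {k r : Type*} [Fintype k] [Fintype r]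
    (M : Matrix (k × r) (k × r) ℂ) : Matrix k k ℂ :=
  Matrix.of fun i j => ∑ a : r, M (i, a) (j, a)


/-! With `P = |ψ⟩⟨ψ|` and the real expectation `a = ⟨ψ|A|ψ⟩`, replacing `A` by `A - a` does not
change `[A, P]`, so `[A, P] = |v⟩⟨ψ| - |ψ⟩⟨v|` with `v = (A - a)ψ ⊥ ψ` and `‖v‖² = V_ψ(A)`.
Then `[A, P]ᴴ [A, P] = |v⟩⟨v| + ‖v‖² P = ‖v‖² Q`, where `Q` is the orthogonal projection onto
`span {ψ, v}`; hence `|[A, P]| = ‖v‖ Q`, whose trace is `2 ‖v‖`. -/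

section

variable {ι : Type*} [Fintype ι]

lemma Matrix.trace_vecMulVec_mul {R : Type*} [CommSemiring R] (x y : ι → R) (B : Matrix ι ι R) :
    (vecMulVec x y * B).trace = y ⬝ᵥ B *ᵥ x := by
  rw [vecMulVec_mul, trace_vecMulVec, dotProduct_comm, dotProduct_mulVec]

lemma ofReal_re_dotProduct_star_self (v : ι → ℂ) : ((star v ⬝ᵥ v).re : ℂ) = star v ⬝ᵥ v :=
  Complex.conj_eq_iff_re.mp (star_dotProduct v v).symm

lemma Matrix.IsHermitian.star_mulVec_dotProduct {A : Matrix ι ι ℂ} (hA : A.IsHermitian)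
    (x y : ι → ℂ) : star (A *ᵥ x) ⬝ᵥ y = star x ⬝ᵥ A *ᵥ y := by
  rw [star_mulVec, hA.eq, dotProduct_mulVec]

lemma Matrix.IsHermitian.ofReal_re_star_dotProduct_mulVec {A : Matrix ι ι ℂ}
    (hA : A.IsHermitian) (ψ : ι → ℂ) :
    ((star ψ ⬝ᵥ A *ᵥ ψ).re : ℂ) = star ψ ⬝ᵥ A *ᵥ ψ :=
  Complex.conj_eq_iff_re.mp <| by
    rw [Complex.star_def.symm, ← star_dotProduct, hA.star_mulVec_dotProduct]

lemma Matrix.IsHermitian.commutator_vecMulVec_star {A : Matrix ι ι ℂ} (hA : A.IsHermitian)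
    (ψ : ι → ℂ) (a : ℝ) :
    A * vecMulVec ψ (star ψ) - vecMulVec ψ (star ψ) * A =
      vecMulVec (A *ᵥ ψ - (a : ℂ) • ψ) (star ψ) - vecMulVec ψ (star (A *ᵥ ψ - (a : ℂ) • ψ)) := by
  rw [mul_vecMulVec, vecMulVec_mul, ← hA.eq, ← star_mulVec, hA.eq, sub_vecMulVec, star_sub,
    vecMulVec_sub, star_smul, smul_vecMulVec, vecMulVec_smul, Complex.star_def, Complex.conj_ofReal]
  abel

lemma Matrix.IsHermitian.variance_vecMulVec_star {A : Matrix ι ι ℂ} (hA : A.IsHermitian)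
    {ψ : ι → ℂ} (hψ : star ψ ⬝ᵥ ψ = 1) {a : ℝ} (ha : (a : ℂ) = star ψ ⬝ᵥ A *ᵥ ψ) :
    variance (vecMulVec ψ (star ψ)) A =
      (star (A *ᵥ ψ - (a : ℂ) • ψ) ⬝ᵥ (A *ᵥ ψ - (a : ℂ) • ψ)).re := by
  have hsq : star ψ ⬝ᵥ (A * A) *ᵥ ψ = star (A *ᵥ ψ) ⬝ᵥ A *ᵥ ψ := by
    rw [hA.star_mulVec_dotProduct, mulVec_mulVec]
  have hexp : star (A *ᵥ ψ - (a : ℂ) • ψ) ⬝ᵥ (A *ᵥ ψ - (a : ℂ) • ψ) =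
      star (A *ᵥ ψ) ⬝ᵥ A *ᵥ ψ - (a : ℂ) ^ 2 := by
    rw [star_sub, star_smul, Complex.star_def, Complex.conj_ofReal, sub_dotProduct,
      dotProduct_sub, dotProduct_sub, smul_dotProduct, smul_dotProduct, dotProduct_smul,
      dotProduct_smul, hA.star_mulVec_dotProduct ψ ψ, hψ, ← ha]
    simp only [smul_eq_mul]
    ring
  rw [variance, trace_vecMulVec_mul, trace_vecMulVec_mul, hsq, hexp, ← ha]
  simp [← Complex.ofReal_pow]

lemma conjTranspose_mul_self_vecMulVec_sub_vecMulVec {ψ v : ι → ℂ} (hψ : star ψ ⬝ᵥ ψ = 1)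
    (hv : star ψ ⬝ᵥ v = 0) :
    (vecMulVec v (star ψ) - vecMulVec ψ (star v))ᴴ * (vecMulVec v (star ψ) - vecMulVec ψ (star v)) =
      vecMulVec v (star v) + (star v ⬝ᵥ v) • vecMulVec ψ (star ψ) := by
  have hv' : star v ⬝ᵥ ψ = 0 := by rw [star_dotProduct, hv, star_zero]
  simp only [conjTranspose_sub, conjTranspose_vecMulVec, star_star, sub_mul, mul_sub,
    vecMulVec_mul_vecMulVec, hψ, hv, hv', zero_smul, vecMulVec_zero, one_smul, vecMulVec_smul]
  abel

variable [DecidableEq ι]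

open scoped MatrixOrder

lemma msqrt_eq_cfcSqrt {A : Matrix ι ι ℂ} (hA : A.PosSemidef) : msqrt A = CFC.sqrt A := by
  rw [msqrt, dif_pos hA, CFC.sqrt_eq_cfc, cfc_nnreal_eq_real _ A, hA.1.cfc_eq]
  simp only [IsHermitian.cfc, Unitary.conjStarAlgAut_apply]
  congr 3
  funext i
  simp [Real.coe_sqrt, Real.coe_toNNReal', max_eq_left (hA.eigenvalues_nonneg i)]

lemma msqrt_mul_self {S : Matrix ι ι ℂ} (hS : S.PosSemidef) : msqrt (S * S) = S := by
  have hSS : (S * S).PosSemidef := by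
    simpa only [hS.1.eq] using posSemidef_conjTranspose_mul_self S
  rw [msqrt_eq_cfcSqrt hSS]
  exact CFC.sqrt_unique rfl hS.nonneg

lemma msqrt_smul_of_mul_self_eq {Q : Matrix ι ι ℂ} (hQ : Q.PosSemidef) (hQQ : Q * Q = Q)
    {r : ℝ} (hr : 0 ≤ r) : msqrt ((r : ℂ) • Q) = (√r : ℂ) • Q := by
  have hsq : (r : ℂ) • Q = ((√r : ℂ) • Q) * ((√r : ℂ) • Q) := by
    rw [smul_mul_smul_comm, hQQ, ← Complex.ofReal_mul, Real.mul_self_sqrt hr]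
  rw [hsq, msqrt_mul_self (hQ.smul (Complex.zero_le_real.mpr (Real.sqrt_nonneg r)))]

lemma traceNorm_eq_of_conjTranspose_mul_self_eq_smul {κ : Type*} [Fintype κ] {X : Matrix κ ι ℂ}
    {Q : Matrix ι ι ℂ} (hQ : Q.PosSemidef) (hQQ : Q * Q = Q) {r : ℝ} (hr : 0 ≤ r)
    (hX : Xᴴ * X = (r : ℂ) • Q) : traceNorm X = √r * Q.trace.re := by
  rw [traceNorm, hX, msqrt_smul_of_mul_self_eq hQ hQQ hr, trace_smul, smul_eq_mul,
    Complex.re_ofReal_mul]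

lemma traceNorm_vecMulVec_sub_vecMulVec {ψ v : ι → ℂ} (hψ : star ψ ⬝ᵥ ψ = 1)
    (hv : star ψ ⬝ᵥ v = 0) :
    traceNorm (vecMulVec v (star ψ) - vecMulVec ψ (star v)) = 2 * √(star v ⬝ᵥ v).re := by
  set r := (star v ⬝ᵥ v).re
  have hr : (r : ℂ) = star v ⬝ᵥ v := ofReal_re_dotProduct_star_self v
  have hr0 : 0 ≤ r := Complex.zero_le_real.mp (hr ▸ dotProduct_star_self_nonneg v)
  have hv' : star v ⬝ᵥ ψ = 0 := by rw [star_dotProduct, hv, star_zero]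
  have hcancel : ((r : ℂ)⁻¹ * r) • vecMulVec v (star v) = vecMulVec v (star v) := by
    rcases eq_or_ne v 0 with rfl | hv0
    · simp
    · rw [inv_mul_cancel₀ (hr ▸ (dotProduct_star_self_pos_iff.mpr hv0).ne'), one_smul]
  -- for `v = 0` the junk value `0⁻¹ = 0` makes `Q` the projection onto `ψ`
  set Q := (r : ℂ)⁻¹ • vecMulVec v (star v) + vecMulVec ψ (star ψ)
  have hQ : Q.PosSemidef :=
    ((posSemidef_vecMulVec_self_star v).smul
      (inv_nonneg_of_nonneg (hr ▸ dotProduct_star_self_nonneg v))).add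
      (posSemidef_vecMulVec_self_star ψ)
  have hQQ : Q * Q = Q := by
    simp only [Q, add_mul, mul_add, smul_mul_assoc, mul_smul_comm, vecMulVec_mul_vecMulVec, hψ,
      hv, hv', ← hr, zero_smul, vecMulVec_zero, one_smul, smul_zero, vecMulVec_smul, smul_smul,
      hcancel, add_zero, zero_add]
  have hX : (vecMulVec v (star ψ) - vecMulVec ψ (star v))ᴴ *
      (vecMulVec v (star ψ) - vecMulVec ψ (star v)) = (r : ℂ) • Q := by
    rw [conjTranspose_mul_self_vecMulVec_sub_vecMulVec hψ hv, ← hr, smul_add, smul_smul,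
      mul_comm, hcancel]
  have htr : Q.trace = ((r⁻¹ * r + 1 : ℝ) : ℂ) := by
    simp only [Q, trace_add, trace_smul, trace_vecMulVec, dotProduct_comm _ (star _), ← hr, hψ,
      smul_eq_mul]
    push_cast
    rfl
  rw [traceNorm_eq_of_conjTranspose_mul_self_eq_smul hQ hQQ hr0 hX, htr, Complex.ofReal_re]
  rcases hr0.eq_or_lt with h | h
  · simp [← h]
  · field_simp
    ring

end

/-- For a pure state ψ, the trace norm of [A, ψ] equals twice the standard deviation of A. -/
theorem traceNorm_commutator_pure (ψ : n → ℂ) (hψ : star ψ ⬝ᵥ ψ = 1)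
    (A : Matrix n n ℂ) (hA : A.IsHermitian) :
    traceNorm (A * Matrix.vecMulVec ψ (star ψ) - Matrix.vecMulVec ψ (star ψ) * A) =
      2 * Real.sqrt (variance (Matrix.vecMulVec ψ (star ψ)) A) := by
  set a := (star ψ ⬝ᵥ A *ᵥ ψ).re
  have ha : (a : ℂ) = star ψ ⬝ᵥ A *ᵥ ψ := hA.ofReal_re_star_dotProduct_mulVec ψ
  have horth : star ψ ⬝ᵥ (A *ᵥ ψ - (a : ℂ) • ψ) = 0 := by
    rw [dotProduct_sub, dotProduct_smul, hψ, ← ha, smul_eq_mul, mul_one, sub_self]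
  rw [hA.commutator_vecMulVec_star ψ a, traceNorm_vecMulVec_sub_vecMulVec hψ horth,
    hA.variance_vecMulVec_star hψ ha]
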